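/- arXiv:1504.06117 — 4 statements merged into one kernel-verified Lean document; each statement's English description precedes it below -/
import Mathlib

section
/- Define a sequence by a_0 = N ≥ 2 and a_{i+1} = a_i + ⌊log₂ a_i⌋. Then the counting function |{i : a_i < k}| is o(k), i.e., |{i : a_i < k}|/k tends to 0 as k → ∞. -/
open Filter

/-- For the sequence `a 0 = N ≥ 2`, `a (i+1) = a i + ⌊log₂ (a i)⌋`, the counting
function `|{i : a i < k}|` is `o(k)`. -/
theorem resetPositions_density_zero (N : ℕ) (hN : 2 ≤ N) (a : ℕ → ℕ)
    (h0 : a 0 = N) (hstep : ∀ i, a (i + 1) = a i + Nat.log 2 (a i)) :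
    Filter.Tendsto (fun k => ((Set.ncard {i | a i < k}) : ℝ) / (k : ℝ)) atTop (nhds 0) := by
  -- basic facts
  have h2 : ∀ i, 2 ≤ a i := by
    intro i
    induction i with
    | zero => omega
    | succ n ih => rw [hstep]; omega
  have hmono : StrictMono a := by
    apply strictMono_nat_of_lt_succ
    intro n
    have hl : 0 < Nat.log 2 (a n) := Nat.log_pos one_lt_two (h2 n)
    rw [hstep]; omega
  have hge : ∀ i, i + 2 ≤ a i := by
    intro i
    induction i with
    | zero => omega
    | succ n ih =>
      have h1 : a n < a (n + 1) := hmono (by omega)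
      omega
  -- the counting function
  have ex : ∀ k : ℕ, ∃ i, k ≤ a i := fun k => ⟨k, by have := hge k; omega⟩
  set m : ℕ → ℕ := fun k => Nat.find (ex k) with hm
  have hsetlt : ∀ k i, i < m k → a i < k := by
    intro k i hi
    have := Nat.find_min (ex k) hi
    omega
  have hseteq : ∀ k, {i | a i < k} = Set.Iio (m k) := by
    intro k
    ext i
    simp only [Set.mem_setOf_eq, Set.mem_Iio]
    constructor
    · intro h
      by_contra hc
      push_neg at hc
      have h1 : k ≤ a (m k) := Nat.find_spec (ex k)
      have h2' : a (m k) ≤ a i := hmono.monotone hc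
      omega
    · exact hsetlt k i
  have hcard : ∀ k, Set.ncard {i | a i < k} = m k := by
    intro k
    rw [hseteq k, ← Finset.coe_Iio, Set.ncard_coe_finset, Nat.card_Iio]
  -- growth lemma
  have hgrow : ∀ t j d, 2 ^ t ≤ a j → a j + d * t ≤ a (j + d) := by
    intro t j d ht
    induction d with
    | zero => simp
    | succ n ih =>
      have hle : 2 ^ t ≤ a (j + n) := le_trans ht (hmono.monotone (Nat.le_add_right _ _))
      have hlog : t ≤ Nat.log 2 (a (j + n)) :=
        Nat.le_log_of_pow_le one_lt_two hle
      have hA : a (j + (n + 1)) = a (j + n) + Nat.log 2 (a (j + n)) := by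
        rw [show j + (n + 1) = (j + n) + 1 from by omega, hstep]
      have hmul : (n + 1) * t = n * t + t := Nat.succ_mul n t
      omega
  -- key bound: for t ≥ 1, m k ≤ m (2^t) + 1 + k / t (over ℝ)
  have hkey : ∀ t k : ℕ, 1 ≤ t → (m k : ℝ) ≤ (m (2 ^ t) : ℝ) + 1 + (k : ℝ) / (t : ℝ) := by
    intro t k ht
    set M := m (2 ^ t) with hM
    have htpos : (0 : ℝ) < (t : ℝ) := by exact_mod_cast ht
    by_cases hc : m k ≤ M + 1
    · have hk0 : (0 : ℝ) ≤ (k : ℝ) / (t : ℝ) := by positivity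
      have : (m k : ℝ) ≤ (M : ℝ) + 1 := by exact_mod_cast hc
      linarith
    · push_neg at hc
      set i := m k - 1 with hi
      have hiM : M + 1 ≤ i := by omega
      have hilt : i < m k := by omega
      have hai : a i < k := hsetlt k i hilt
      have haM : 2 ^ t ≤ a M := Nat.find_spec (ex (2 ^ t))
      set d := i - M with hd
      have hid : i = M + d := by omega
      have := hgrow t M d haM
      rw [← hid] at this
      -- a M + d * t ≤ a i < k, and a M ≥ 2^t ≥ 0
      have hdt : d * t < k := by omega
      have hdr : (d : ℝ) < (k : ℝ) / (t : ℝ) := by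
        rw [lt_div_iff₀ htpos]
        exact_mod_cast hdt
      have hmk : (m k : ℝ) = (M : ℝ) + (d : ℝ) + 1 := by
        have : m k = M + d + 1 := by omega
        exact_mod_cast this
      linarith
  -- conclude the limit
  rw [NormedAddCommGroup.tendsto_nhds_zero]
  intro ε hε
  -- choose t with 1/t < ε/2
  obtain ⟨t, ht1, ht2⟩ : ∃ t : ℕ, 1 ≤ t ∧ (1 : ℝ) / (t : ℝ) < ε / 2 := by
    obtain ⟨t, ht⟩ := exists_nat_gt (2 / ε)
    refine ⟨max 1 t, le_max_left _ _, ?_⟩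
    have htt : (2 / ε : ℝ) < (max 1 t : ℕ) := by
      have : (t : ℝ) ≤ ((max 1 t : ℕ) : ℝ) := by exact_mod_cast le_max_right 1 t
      linarith
    have hpos : (0 : ℝ) < ((max 1 t : ℕ) : ℝ) := by
      have : (1 : ℕ) ≤ max 1 t := le_max_left _ _
      exact_mod_cast Nat.lt_of_lt_of_le Nat.zero_lt_one this
    rw [div_lt_iff₀ hpos] at *
    rw [div_lt_iff₀ hε] at htt
    nlinarith
  set C : ℝ := (m (2 ^ t) : ℝ) + 1 with hC
  have hCpos : 0 ≤ C := by positivity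
  have hlim : Tendsto (fun k : ℕ => C / (k : ℝ)) atTop (nhds 0) :=
    tendsto_const_div_atTop_nhds_zero_nat C
  have hev : ∀ᶠ k : ℕ in atTop, C / (k : ℝ) < ε / 2 := by
    have := hlim.eventually (eventually_lt_nhds (show (0:ℝ) < ε / 2 by linarith))
    exact this
  filter_upwards [hev, eventually_ge_atTop 1] with k hk hk1
  have hkpos : (0 : ℝ) < (k : ℝ) := by exact_mod_cast hk1
  have htpos : (0 : ℝ) < (t : ℝ) := by exact_mod_cast ht1
  have hnn : (0 : ℝ) ≤ (Set.ncard {i | a i < k} : ℝ) / (k : ℝ) := by positivity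
  rw [Real.norm_eq_abs, abs_of_nonneg hnn]
  have hb := hkey t k ht1
  rw [hcard k]
  have h1 : ((k : ℝ) / (t : ℝ)) / (k : ℝ) = 1 / (t : ℝ) := by
    field_simp
  calc (m k : ℝ) / (k : ℝ) ≤ (C + (k : ℝ) / (t : ℝ)) / (k : ℝ) := by
        gcongr
      _ = C / (k : ℝ) + 1 / (t : ℝ) := by rw [add_div, h1]
      _ < ε / 2 + ε / 2 := by linarith
      _ = ε := by ring
end

section
/- If a sequence (c_i) of reals is bounded in absolute value by a constant M, and two partial-sum sequences S_k and T_k satisfy S_k ≤ T_k ≤ S_{k + ⌊log₂ k⌋} for almost all k, and moreover the number of nonzero terms among c_1,...,c_k is at least k/m for a fixed constant m ≥ 1, then limsup S_k/k = limsup T_k/k, where S_k = Σ_{i=1}^k c_i. -/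
/-!
Writing `S k = ∑_{i<k} c i`, the sandwich gives `0 ≤ T k - S k ≤ S (k + log₂ k) - S k ≤ M log₂ k`,
so `T k / k - S k / k → 0`. Since `S k / k` is bounded by `M`, adding a null sequence to it
does not change its `limsup`.
-/

open Filter Finset Topology

section LimsupAddNull

variable {ι α : Type*} [AddCommGroup α] [ConditionallyCompleteLinearOrder α] [DenselyOrdered α]
  [AddLeftMono α] [TopologicalSpace α] [OrderTopology α] {f : Filter ι} [f.NeBot] {u v : ι → α}

theorem Filter.limsup_eq_of_tendsto_sub_zero (hu_le : IsBoundedUnder (· ≤ ·) f u)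
    (hu_ge : IsBoundedUnder (· ≥ ·) f u) (h : Tendsto (v - u) f (𝓝 0)) :
    limsup v f = limsup u f := by
  have hv : v = u + (v - u) := (add_sub_cancel u v).symm
  apply le_antisymm
  · calc limsup v f = limsup (u + (v - u)) f := by rw [← hv]
      _ ≤ limsup u f + limsup (v - u) f :=
        limsup_add_le hu_ge hu_le h.isBoundedUnder_ge.isCoboundedUnder_le h.isBoundedUnder_le
      _ = limsup u f := by rw [h.limsup_eq, add_zero]
  · calc limsup u f = limsup u f + liminf (v - u) f := by rw [h.liminf_eq, add_zero]
      _ ≤ limsup (u + (v - u)) f :=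
        le_limsup_add hu_le hu_ge.isCoboundedUnder_le h.isBoundedUnder_le h.isBoundedUnder_ge
      _ = limsup v f := by rw [← hv]

end LimsupAddNull

theorem tendsto_natLog_div_atTop (b : ℕ) :
    Tendsto (fun k : ℕ => (Nat.log b k : ℝ) / k) atTop (𝓝 0) := by
  have hlogb : Tendsto (fun k : ℕ => Real.logb b k / k) atTop (𝓝 0) :=
    Real.isLittleO_logb_id_atTop.tendsto_div_nhds_zero.comp tendsto_natCast_atTop_atTop
  refine squeeze_zero (fun k => by positivity) (fun k => ?_) hlogb
  gcongr
  exact Real.natLog_le_logb k b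

theorem sum_range_add_le_add_mul {c : ℕ → ℝ} {M : ℝ} (hM : ∀ i, c i ≤ M) (k L : ℕ) :
    ∑ i ∈ range (k + L), c i ≤ ∑ i ∈ range k, c i + L * M := by
  rw [sum_range_add]
  gcongr
  simpa using sum_le_card_nsmul (range L) (fun i => c (k + i)) M fun i _ => hM (k + i)

theorem abs_sum_range_div_le {c : ℕ → ℝ} {M : ℝ} (hM : ∀ i, |c i| ≤ M) (k : ℕ) :
    |(∑ i ∈ range k, c i) / k| ≤ M := by
  rcases Nat.eq_zero_or_pos k with rfl | hk
  · simpa using (abs_nonneg _).trans (hM 0)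
  have hk' : (0 : ℝ) < k := Nat.cast_pos.mpr hk
  rw [abs_div, Nat.abs_cast, div_le_iff₀ hk']
  calc |∑ i ∈ range k, c i| ≤ ∑ i ∈ range k, |c i| := abs_sum_le_sum_abs _ _
    _ ≤ #(range k) • M := sum_le_card_nsmul _ _ _ fun i _ => hM i
    _ = M * k := by rw [card_range, nsmul_eq_mul, mul_comm]

theorem limsup_eq_of_sandwich_log_window_general (c : ℕ → ℝ) (M : ℝ) (hM : ∀ i, |c i| ≤ M)
    (T : ℕ → ℝ)
    (hST : ∀ᶠ k in atTop,
      (∑ i ∈ Finset.range k, c i) ≤ T k ∧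
        T k ≤ ∑ i ∈ Finset.range (k + Nat.log 2 k), c i) :
    Filter.limsup (fun k => (∑ i ∈ Finset.range k, c i) / (k : ℝ)) atTop
      = Filter.limsup (fun k => T k / (k : ℝ)) atTop := by
  set u : ℕ → ℝ := fun k => (∑ i ∈ range k, c i) / k
  have hu : ∀ k, |u k| ≤ M := abs_sum_range_div_le hM
  have hgap : Tendsto (fun k : ℕ => M * ((Nat.log 2 k : ℝ) / k)) atTop (𝓝 0) := by
    simpa using (tendsto_natLog_div_atTop 2).const_mul M
  refine (limsup_eq_of_tendsto_sub_zero (isBoundedUnder_of ⟨M, fun k => (abs_le.1 (hu k)).2⟩)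
    (isBoundedUnder_of ⟨-M, fun k => (abs_le.1 (hu k)).1⟩) (squeeze_zero' ?_ ?_ hgap)).symm
  · filter_upwards [hST] with k hk
    simpa [u, ← sub_div] using div_nonneg (sub_nonneg.2 hk.1) k.cast_nonneg
  · filter_upwards [hST] with k hk
    have hwindow := hk.2.trans (sum_range_add_le_add_mul (fun i => (abs_le.1 (hM i)).2) k _)
    simp only [Pi.sub_apply, u, ← sub_div, mul_div_assoc']
    gcongr
    linarith

/-- If `|c i| ≤ M`, the partial sums `S k` of `c` and a sequence `T` satisfy
eventually `S k ≤ T k ≤ S (k + ⌊log₂ k⌋)`, and the number of nonzero terms among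
the first `k` terms of `c` is at least `k/m` (with `m ≥ 1`), then
`limsup S k / k = limsup T k / k`. -/
theorem limsup_eq_of_sandwich_log_window (c : ℕ → ℝ) (M : ℝ) (hM : ∀ i, |c i| ≤ M)
    (T : ℕ → ℝ) (m : ℕ) (hm : 1 ≤ m)
    (hST : ∀ᶠ k in atTop,
      (∑ i ∈ Finset.range k, c i) ≤ T k ∧
        T k ≤ ∑ i ∈ Finset.range (k + Nat.log 2 k), c i)
    (hnz : ∀ k : ℕ, (k : ℝ) / (m : ℝ) ≤ (Set.ncard {i | i < k ∧ c i ≠ 0} : ℝ)) :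
    Filter.limsup (fun k => (∑ i ∈ Finset.range k, c i) / (k : ℝ)) atTop
      = Filter.limsup (fun k => T k / (k : ℝ)) atTop :=
  limsup_eq_of_sandwich_log_window_general c M hM T hST
end

section
/- Let A be a finite directed graph with rational edge weights and a designated initial vertex, where every infinite path corresponds to a run. If there exists an infinite path from the initial vertex of limit-average value ≤ λ, then there exists a 'lasso': a finite path from the initial vertex reaching a cycle whose average edge weight is ≤ λ. -/
/-!
If no cycle through a vertex of the path has mean weight `≤ λ`, then, as there are only finitely
many means of cycles of length `≤ |V|`, all of them are `≥ μ` for some `μ > λ`. Cutting cycles out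
of a prefix of the path one at a time until at most `|V|` edges remain shows that its weight is at
least `μ k - C`, so the limit average is at least `μ`. A cycle of mean `≤ λ` through `π t`, unrolled
after the prefix `π 0, …, π t`, is the lasso.
-/

open Filter Finset
open Topology

theorem Set.Finite.exists_gt_forall_le {α : Type*} [LinearOrder α] [NoMaxOrder α] {S : Set α}
    (hS : S.Finite) {a : α} (h : ∀ x ∈ S, a < x) : ∃ b, a < b ∧ ∀ x ∈ S, b ≤ x := by
  rcases S.eq_empty_or_nonempty with rfl | hne
  · obtain ⟨b, hb⟩ := exists_gt a
    exact ⟨b, hb, by simp⟩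
  · obtain ⟨b, hb, hmin⟩ := S.exists_min_image id hS hne
    exact ⟨b, h b hb, hmin⟩

theorem le_limsup_avg {f : ℕ → ℝ} {μ C B : ℝ} (hlow : ∀ k : ℕ, μ * k - C ≤ ∑ i ∈ range k, f i)
    (hup : ∀ i, f i ≤ B) : μ ≤ limsup (fun k : ℕ => (∑ i ∈ range k, f i) / k) atTop := by
  have hlim : Tendsto (fun k : ℕ => μ - C / k) atTop (𝓝 μ) := by
    simpa using tendsto_const_nhds.sub (tendsto_const_div_atTop_nhds_zero_nat C)
  have hbelow : ∀ᶠ k : ℕ in atTop, μ - C / k ≤ (∑ i ∈ range k, f i) / k := by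
    filter_upwards [eventually_gt_atTop 0] with k hk
    have hk' : (0 : ℝ) < k := by exact_mod_cast hk
    rw [le_div_iff₀ hk', sub_mul, div_mul_cancel₀ C hk'.ne']
    linarith [hlow k]
  have habove : ∀ᶠ k : ℕ in atTop, (∑ i ∈ range k, f i) / k ≤ B := by
    filter_upwards [eventually_gt_atTop 0] with k hk
    rw [div_le_iff₀ (by exact_mod_cast hk)]
    simpa [mul_comm] using sum_le_sum fun i (_ : i ∈ range k) => hup i
  calc μ = limsup (fun k : ℕ => μ - C / k) atTop := hlim.limsup_eq.symm
    _ ≤ _ := limsup_le_limsup hbelow hlim.isCoboundedUnder_le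
      (isBoundedUnder_of_eventually_le habove)

section Walks

variable {V : Type*}

def walkWeight (w : V → V → ℝ) (c : ℕ → V) (k : ℕ) : ℝ :=
  ∑ i ∈ range k, w (c i) (c (i + 1))

theorem walkWeight_sub_const (w : V → V → ℝ) (μ : ℝ) (c : ℕ → V) (k : ℕ) :
    walkWeight (fun u v => w u v - μ) c k = walkWeight w c k - k * μ := by
  simp [walkWeight, sum_sub_distrib]

theorem finite_range_walkWeight [Finite V] (w : V → V → ℝ) (k : ℕ) :
    (Set.range fun c : ℕ → V => walkWeight w c k).Finite := by
  refine (Set.finite_range fun d : Fin (k + 1) → V =>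
    ∑ j : Fin k, w (d j.castSucc) (d j.succ)).subset ?_
  rintro _ ⟨c, rfl⟩
  exact ⟨fun i => c i, by
    simpa [walkWeight] using Fin.sum_univ_eq_sum_range (fun j => w (c j) (c (j + 1))) k⟩

def cutCycle (c : ℕ → V) (a ℓ : ℕ) (i : ℕ) : V :=
  if i < a then c i else c (i + ℓ)

section cutCycle

variable {c : ℕ → V} {a ℓ : ℕ}

theorem cutCycle_of_le (h : c (a + ℓ) = c a) {i : ℕ} (hi : i ≤ a) : cutCycle c a ℓ i = c i := by
  rcases hi.lt_or_eq with hi | rfl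
  · simp [cutCycle, hi]
  · simp [cutCycle, h]

theorem cutCycle_add (i : ℕ) : cutCycle c a ℓ (a + i) = c (a + ℓ + i) := by
  simp only [cutCycle, Nat.not_lt.2 (Nat.le_add_right a i), if_false]
  congr 1
  omega

theorem walk_cutCycle {G : V → V → Prop} {k : ℕ} (hc : ∀ i < k, G (c i) (c (i + 1)))
    (h : c (a + ℓ) = c a) (hk : a + ℓ ≤ k) :
    ∀ i < k - ℓ, G (cutCycle c a ℓ i) (cutCycle c a ℓ (i + 1)) := by
  intro i hi
  rcases lt_or_ge i a with hia | hai
  · rw [cutCycle_of_le h hia.le, cutCycle_of_le h hia]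
    exact hc i (by omega)
  · obtain ⟨j, rfl⟩ := Nat.exists_eq_add_of_le hai
    rw [add_assoc, cutCycle_add, cutCycle_add]
    exact hc _ (by omega)

theorem walkWeight_cutCycle (w : V → V → ℝ) {k : ℕ} (h : c (a + ℓ) = c a) (hk : a + ℓ ≤ k) :
    walkWeight w c k =
      walkWeight w (cutCycle c a ℓ) (k - ℓ) + walkWeight w (fun j => c (a + j)) ℓ := by
  obtain ⟨m, rfl⟩ := Nat.exists_eq_add_of_le hk
  have hprefix : ∀ i ∈ range a, w (cutCycle c a ℓ i) (cutCycle c a ℓ (i + 1)) =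
      w (c i) (c (i + 1)) := fun i hi => by
    rw [cutCycle_of_le h (mem_range.1 hi).le, cutCycle_of_le h (mem_range.1 hi)]
  have hsuffix : ∀ i ∈ range m, w (cutCycle c a ℓ (a + i)) (cutCycle c a ℓ (a + i + 1)) =
      w (c (a + ℓ + i)) (c (a + ℓ + i + 1)) := fun i _ => by
    rw [add_assoc a i, cutCycle_add, cutCycle_add]; rfl
  rw [show a + ℓ + m - ℓ = a + m by omega]
  simp only [walkWeight, sum_range_add, sum_congr rfl hprefix, sum_congr rfl hsuffix,
    ← add_assoc]
  exact add_right_comm _ _ _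

end cutCycle

theorem exists_lt_le_card_eq [Fintype V] (c : ℕ → V) :
    ∃ a b, a < b ∧ b ≤ Fintype.card V ∧ c a = c b := by
  obtain ⟨x, hx, y, hy, hne, hxy⟩ := exists_ne_map_eq_of_card_lt_of_maps_to
    (s := range (Fintype.card V + 1)) (t := univ) (by simp) (f := c) (fun _ _ => by simp)
  rw [mem_range] at hx hy
  rcases hne.lt_or_gt with h | h
  · exact ⟨x, y, h, by omega, hxy⟩
  · exact ⟨y, x, h, by omega, hxy.symm⟩

-- Removing cycles one at a time leaves a walk of at most `card V` edges.
theorem neg_le_walkWeight_of_cycles_nonneg [Fintype V] (G : V → V → Prop) (w : V → V → ℝ)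
    {B : ℝ} (hB : 0 ≤ B) (hw : ∀ u v, -B ≤ w u v)
    (hcyc : ∀ (c : ℕ → V) (ℓ : ℕ), 0 < ℓ → ℓ ≤ Fintype.card V →
      (∀ i < ℓ, G (c i) (c (i + 1))) → c ℓ = c 0 → 0 ≤ walkWeight w c ℓ)
    (k : ℕ) (c : ℕ → V) (hc : ∀ i < k, G (c i) (c (i + 1))) :
    -(Fintype.card V * B) ≤ walkWeight w c k := by
  induction k using Nat.strong_induction_on generalizing c with
  | _ k ih =>
  by_cases hk : k ≤ Fintype.card V
  · calc -(Fintype.card V * B) ≤ ∑ _i ∈ range k, -B := by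
          have : (k : ℝ) ≤ Fintype.card V := by exact_mod_cast hk
          simp only [sum_const, card_range, nsmul_eq_mul]
          nlinarith
      _ ≤ walkWeight w c k := sum_le_sum fun i _ => hw _ _
  · obtain ⟨a, b, hab, hb, hcab⟩ := exists_lt_le_card_eq c
    have hloop : c (a + (b - a)) = c a := by rw [Nat.add_sub_cancel' hab.le, hcab]
    rw [walkWeight_cutCycle w hloop (by omega)]
    have hcut := ih (k - (b - a)) (by omega) _ (walk_cutCycle hc hloop (by omega))
    have hcycle := hcyc (fun j => c (a + j)) (b - a) (by omega) (by omega)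
      (fun i hi => hc (a + i) (by omega)) hloop
    linarith

theorem walk_mod_of_cycle {E : V → V → Prop} {c : ℕ → V} {ℓ : ℕ} (hℓ : 0 < ℓ)
    (hc : ∀ i < ℓ, E (c i) (c (i + 1))) (hcℓ : c ℓ = c 0) (i : ℕ) :
    E (c (i % ℓ)) (c ((i + 1) % ℓ)) := by
  have hi := Nat.mod_lt i hℓ
  rw [← Nat.mod_add_mod]
  rcases (show i % ℓ + 1 ≤ ℓ from hi).lt_or_eq with hlt | heq
  · rw [Nat.mod_eq_of_lt hlt]
    exact hc _ hi
  · rw [heq, Nat.mod_self, ← hcℓ]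
    simpa only [heq] using hc _ hi

theorem exists_lasso {E : V → V → Prop} {π c : ℕ → V} {t ℓ : ℕ} (hℓ : 0 < ℓ)
    (hπ : ∀ i, E (π i) (π (i + 1))) (hc : ∀ i < ℓ, E (c i) (c (i + 1))) (hcℓ : c ℓ = c 0)
    (hct : c 0 = π t) :
    ∃ σ : ℕ → V, σ 0 = π 0 ∧ (∀ i, E (σ i) (σ (i + 1))) ∧ (∀ i, t ≤ i → σ (i + ℓ) = σ i) ∧
      ∀ j ≤ ℓ, σ (t + j) = c j := by
  refine ⟨fun i => if i < t then π i else c ((i - t) % ℓ), ?_, fun i => ?_, fun i hi => ?_,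
    fun j hj => ?_⟩
  · rcases Nat.eq_zero_or_pos t with rfl | ht
    · simp [hct]
    · simp [ht]
  · rcases lt_trichotomy (i + 1) t with hlt | heq | hgt
    · simpa only [if_pos hlt, if_pos ((Nat.lt_succ_self i).trans hlt)] using hπ i
    · subst heq
      simpa [hct] using hπ i
    · simpa [show ¬ i < t by omega, show ¬ i + 1 < t by omega,
        show i + 1 - t = i - t + 1 by omega] using walk_mod_of_cycle hℓ hc hcℓ (i - t)
  · simp [show ¬ i < t by omega, show ¬ i + ℓ < t by omega, show i + ℓ - t = i - t + ℓ by omega]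
  · rcases hj.lt_or_eq with hj | rfl
    · simp [Nat.mod_eq_of_lt hj]
    · simp [hcℓ]

theorem exists_cycle_le_of_limsup_le [Fintype V] (E : V → V → Prop) (w : V → V → ℝ)
    {π : ℕ → V} {lam : ℝ} (hπ : ∀ i, E (π i) (π (i + 1)))
    (h : limsup (fun k : ℕ => walkWeight w π k / k) atTop ≤ lam) :
    ∃ (c : ℕ → V) (t ℓ : ℕ), 0 < ℓ ∧ (∀ i < ℓ, E (c i) (c (i + 1))) ∧ c ℓ = c 0 ∧
      c 0 = π t ∧ walkWeight w c ℓ ≤ lam * ℓ := by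
  by_contra! hno
  -- Cycles of `G` start on `π`, so they can be reached from `π 0`.
  set G : V → V → Prop := fun u v => E u v ∧ u ∈ Set.range π
  set means : Set ℝ := {x | ∃ (c : ℕ → V) (ℓ : ℕ), 0 < ℓ ∧ ℓ ≤ Fintype.card V ∧
    (∀ i < ℓ, G (c i) (c (i + 1))) ∧ c ℓ = c 0 ∧ walkWeight w c ℓ / ℓ = x}
  have hfin : means.Finite := by
    refine ((Set.finite_Iic (Fintype.card V)).biUnion fun ℓ _ =>
      (finite_range_walkWeight w ℓ).image (· / (ℓ : ℝ))).subset ?_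
    rintro _ ⟨c, ℓ, -, hℓ, -, -, rfl⟩
    exact Set.mem_biUnion (Set.mem_Iic.2 hℓ) ⟨_, ⟨c, rfl⟩, rfl⟩
  obtain ⟨μ, hlamμ, hμ⟩ := hfin.exists_gt_forall_le (a := lam) <| by
    rintro _ ⟨c, ℓ, hℓ, -, hc, hcℓ, rfl⟩
    obtain ⟨t, ht⟩ := (hc 0 hℓ).2
    exact (lt_div_iff₀ (by exact_mod_cast hℓ)).2
      (hno c t ℓ hℓ (fun i hi => (hc i hi).1) hcℓ ht.symm)
  obtain ⟨B, hB0, hB⟩ : ∃ B, 0 ≤ B ∧ ∀ u v, |w u v - μ| ≤ B :=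
    ⟨_, sum_nonneg fun _ _ => abs_nonneg _, fun u v => single_le_sum
      (f := fun p : V × V => |w p.1 p.2 - μ|) (fun _ _ => abs_nonneg _) (mem_univ (u, v))⟩
  have hlow := neg_le_walkWeight_of_cycles_nonneg G (fun u v => w u v - μ) hB0
    (fun u v => (abs_le.1 (hB u v)).1)
    (fun c ℓ hℓ hℓn hc hcℓ => by
      have := hμ _ ⟨c, ℓ, hℓ, hℓn, hc, hcℓ, rfl⟩
      rw [le_div_iff₀ (by exact_mod_cast hℓ)] at this
      rw [walkWeight_sub_const]
      linarith)
  have hμle := le_limsup_avg (f := fun i => w (π i) (π (i + 1))) (μ := μ)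
    (C := Fintype.card V * B) (B := B + μ) (fun k => by
      have := hlow k π fun i _ => ⟨hπ i, i, rfl⟩
      rw [walkWeight_sub_const, walkWeight] at this
      linarith)
    (fun i => by linarith [(abs_le.1 (hB (π i) (π (i + 1)))).2])
  exact absurd (hμle.trans h) (not_le.2 hlamμ)

end Walks

/-- If a finite weighted graph has an infinite path from `v0` of limit-average
value `≤ λ`, then it has a lasso from `v0` whose cycle has average weight `≤ λ`. -/
theorem lasso_of_limAvg_le {V : Type*} [Fintype V]
    (E : V → V → Prop) (wt : V → V → ℚ) (v0 : V) (lam : ℝ)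
    (h : ∃ π : ℕ → V, π 0 = v0 ∧ (∀ i, E (π i) (π (i + 1))) ∧
      Filter.limsup
        (fun k => (∑ i ∈ Finset.range k, (wt (π i) (π (i + 1)) : ℝ)) / (k : ℝ))
        atTop ≤ lam) :
    ∃ (σ : ℕ → V) (s ℓ : ℕ), 0 < ℓ ∧ σ 0 = v0 ∧ (∀ i, E (σ i) (σ (i + 1))) ∧
      (∀ i, s ≤ i → σ (i + ℓ) = σ i) ∧
      (∑ j ∈ Finset.range ℓ, (wt (σ (s + j)) (σ (s + j + 1)) : ℝ)) / (ℓ : ℝ) ≤ lam := by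
  obtain ⟨π, hπ0, hπ, hπavg⟩ := h
  obtain ⟨c, t, ℓ, hℓ, hc, hcℓ, hct, hcw⟩ :=
    exists_cycle_le_of_limsup_le E (fun u v => (wt u v : ℝ)) hπ hπavg
  obtain ⟨σ, hσ0, hσ, hσper, hσc⟩ := exists_lasso hℓ hπ hc hcℓ hct
  refine ⟨σ, t, ℓ, hℓ, hσ0.trans hπ0, hσ, hσper, ?_⟩
  rw [div_le_iff₀ (by exact_mod_cast hℓ)]
  refine le_of_eq_of_le (sum_congr rfl fun j hj => ?_) hcw
  rw [hσc j (mem_range.1 hj).le, ← hσc (j + 1) (mem_range.1 hj)]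
  rfl
end

section
/- Let w be an ultimately periodic infinite word with period u of length p, and let π be an accepting run of a finite-state deterministic weighted automaton on w with limit-average value v. If a state q occurs at two positions i < j within one period with equal partial behavior, then removing the segment between i and j from every period yields a word whose limit-average run value does not increase, provided the average weight of the removed cycle is at least v. -/
/- `S / p` is the mediant of `C / k` and `(S - C) / (p - k)`, so it lies between them. -/
theorem sub_div_sub_le_div_of_div_le_div {α : Type*} [Field α] [LinearOrder α]
    [IsStrictOrderedRing α] {S C p k : α} (hk : 0 < k) (hkp : k < p) (h : S / p ≤ C / k) :
    (S - C) / (p - k) ≤ S / p := by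
  have hp : 0 < p := hk.trans hkp
  rw [div_le_div_iff₀ hp hk] at h
  rw [div_le_div_iff₀ (sub_pos.2 hkp) hp]
  linarith

theorem cycle_removal_general (d : ℕ → ℝ) (p i j : ℕ)
    (hij : i < j) (hlt : j - i < p)
    (hc : (∑ t ∈ Finset.range p, d t) / (p : ℝ) ≤
      (∑ t ∈ Finset.Ico i j, d t) / ((j : ℝ) - (i : ℝ))) :
    ((∑ t ∈ Finset.range p, d t) - ∑ t ∈ Finset.Ico i j, d t) /
        ((p : ℝ) - ((j : ℝ) - (i : ℝ))) ≤
      (∑ t ∈ Finset.range p, d t) / (p : ℝ) := by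
  have hk : (0 : ℝ) < (j : ℝ) - (i : ℝ) := sub_pos.2 (by exact_mod_cast hij)
  have hkp : (j : ℝ) - (i : ℝ) < p := by
    rw [← Nat.cast_sub hij.le]
    exact_mod_cast hlt
  exact sub_div_sub_le_div_of_div_le_div hk hkp hc

/-- Cycle removal: if a period of length `p` with weights `d` contains a cycle
(segment `[i, j)`) whose average weight is at least the period average, then the
period with the cycle removed has average at most the period average. -/
theorem cycle_removal (d : ℕ → ℝ) (p i j : ℕ)
    (hij : i < j) (hjp : j ≤ p) (hlt : j - i < p)
    (hc : (∑ t ∈ Finset.range p, d t) / (p : ℝ) ≤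
      (∑ t ∈ Finset.Ico i j, d t) / ((j : ℝ) - (i : ℝ))) :
    ((∑ t ∈ Finset.range p, d t) - ∑ t ∈ Finset.Ico i j, d t) /
        ((p : ℝ) - ((j : ℝ) - (i : ℝ))) ≤
      (∑ t ∈ Finset.range p, d t) / (p : ℝ) :=
  cycle_removal_general d p i j hij hlt hc
end
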